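/- Assume p ∈ (0,1), p ≠ 1/2, and ε ∈ (0,1), ε ≠ 1/2 (so K ≠ 0). Then the two-step contraction rate ρ⁽²⁾ := sup_{w ∈ ℝ} |A'(K + A(w))·A'(w)| satisfies ρ⁽²⁾ < (1−2p)²; consequently ϱ := √(ρ⁽²⁾) < |1−2p|. -/
import Mathlib


lemma cosh_add_le (a b : ℝ) : Real.cosh (a + b) ≤ Real.cosh a * Real.exp |b| := by
  rw [Real.cosh_add]
  have h1 : Real.sinh a * Real.sinh b ≤ Real.cosh a * |Real.sinh b| := by
    calc Real.sinh a * Real.sinh b ≤ |Real.sinh a * Real.sinh b| := le_abs_self _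
    _ = |Real.sinh a| * |Real.sinh b| := abs_mul _ _
    _ ≤ Real.cosh a * |Real.sinh b| := by
        apply mul_le_mul_of_nonneg_right _ (abs_nonneg _)
        rw [Real.abs_sinh]
        calc Real.sinh |a| ≤ Real.cosh |a| := by nlinarith [Real.cosh_sq |a|, Real.one_le_cosh |a|, Real.sinh_nonneg_iff.mpr (abs_nonneg a)]
        _ = Real.cosh a := Real.cosh_abs a
  have h2 : Real.cosh b + |Real.sinh b| = Real.exp |b| := by
    rw [Real.abs_sinh, ← Real.cosh_abs b, Real.cosh_add_sinh]
  nlinarith [Real.cosh_pos a]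

lemma abs_A_le (J w : ℝ) :
    |(1/2 : ℝ) * Real.log (Real.cosh (w + J) / Real.cosh (w - J))| ≤ |w| := by
  have hp1 := Real.cosh_pos (w + J)
  have hp2 := Real.cosh_pos (w - J)
  have hub : Real.cosh (w + J) ≤ Real.cosh (w - J) * Real.exp |2 * w| := by
    have := cosh_add_le (J - w) (2 * w)
    rw [show J - w + 2 * w = w + J by ring, ← Real.cosh_neg (J - w),
      show -(J - w) = w - J by ring] at this
    exact this
  have hlb : Real.cosh (w - J) ≤ Real.cosh (w + J) * Real.exp |2 * w| := by
    have := cosh_add_le (w + J) (-(2 * w))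
    rw [show w + J + -(2 * w) = -(w - J) by ring, Real.cosh_neg, abs_neg] at this
    exact this
  have hlog1 : Real.log (Real.cosh (w + J) / Real.cosh (w - J)) ≤ |2 * w| := by
    rw [Real.log_le_iff_le_exp (div_pos hp1 hp2), div_le_iff₀ hp2]
    linarith
  have hlog2 : -|2 * w| ≤ Real.log (Real.cosh (w + J) / Real.cosh (w - J)) := by
    rw [Real.le_log_iff_exp_le (div_pos hp1 hp2), le_div_iff₀ hp2, Real.exp_neg,
      inv_mul_le_iff₀ (Real.exp_pos _)]
    linarith
  rw [abs_le]
  rw [show |2 * w| = 2 * |w| by rw [abs_mul]; norm_num] at hlog1 hlog2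
  constructor <;> linarith


/-- Assume `p ∈ (0,1)`, `p ≠ 1/2`, and `ε ∈ (0,1)`, `ε ≠ 1/2` (so `K ≠ 0`).
Then the two-step contraction rate `ρ⁽²⁾ := sup_{w ∈ ℝ} |A'(K + A(w))·A'(w)|` satisfies
`ρ⁽²⁾ < (1−2p)²`; consequently `ϱ := √(ρ⁽²⁾) < |1−2p|`.
Here `A'(w) = sinh(2J)/(cosh(2J)+cosh(2w))` is the derivative of `A`. -/
theorem stmt_10 (p ε : ℝ) (hp0 : 0 < p) (hp1 : p < 1) (hp2 : p ≠ 1 / 2)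
    (hε0 : 0 < ε) (hε1 : ε < 1) (hε2 : ε ≠ 1 / 2)
    (J K : ℝ)
    (hJ : J = (1 / 2) * Real.log ((1 - p) / p))
    (hK : K = (1 / 2) * Real.log ((1 - ε) / ε))
    (A A' : ℝ → ℝ)
    (hA : ∀ u, A u = (1 / 2) * Real.log (Real.cosh (u + J) / Real.cosh (u - J)))
    (hA' : ∀ w, A' w = Real.sinh (2 * J) / (Real.cosh (2 * J) + Real.cosh (2 * w))) :
    (⨆ w : ℝ, |A' (K + A w) * A' w|) < (1 - 2 * p) ^ 2 ∧
    Real.sqrt (⨆ w : ℝ, |A' (K + A w) * A' w|) < |1 - 2 * p| := by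
  set c := Real.cosh (2 * J) with hc
  set d := Real.cosh K with hd
  set s := Real.sinh (2 * J) with hs
  -- J ≠ 0
  have hxpos : (0:ℝ) < (1 - p) / p := div_pos (by linarith) hp0
  have hJne : J ≠ 0 := by
    intro h
    rw [h] at hJ
    have hlog : Real.log ((1 - p) / p) = 0 := by linarith [hJ.symm ▸ (by ring_nf : (0:ℝ) = 0)]
    have := Real.eq_one_of_pos_of_log_eq_zero hxpos hlog
    have : 1 - p = p := by field_simp at this; linarith
    exact hp2 (by linarith)
  have hKne : K ≠ 0 := by
    intro h
    have hypos : (0:ℝ) < (1 - ε) / ε := div_pos (by linarith) hε0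
    rw [h] at hK
    have hlog : Real.log ((1 - ε) / ε) = 0 := by linarith
    have := Real.eq_one_of_pos_of_log_eq_zero hypos hlog
    have : 1 - ε = ε := by field_simp at this; linarith
    exact hε2 (by linarith)
  have hc1 : 1 < c := Real.one_lt_cosh.mpr (by simpa using mul_ne_zero two_ne_zero hJne)
  have hd1 : 1 < d := Real.one_lt_cosh.mpr hKne
  -- c in terms of p
  have he : Real.exp (2 * J) = (1 - p) / p := by
    rw [hJ, show 2 * ((1/2 : ℝ) * Real.log ((1 - p) / p)) = Real.log ((1 - p) / p) by ring,
      Real.exp_log hxpos]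
  have hcval : c = ((1 - p) / p + p / (1 - p)) / 2 := by
    rw [hc, Real.cosh_eq, Real.exp_neg, he, inv_div]
  have hpne : p ≠ 0 := ne_of_gt hp0
  have hpne1 : (1 : ℝ) - p ≠ 0 := by intro h; linarith
  have hkey : (c - 1) / (c + 1) = (1 - 2 * p) ^ 2 := by
    have hc1' : c - 1 = (1 - 2*p)^2 / (2 * p * (1 - p)) := by
      rw [hcval]; field_simp; ring
    have hc2' : c + 1 = 1 / (2 * p * (1 - p)) := by
      rw [hcval]; field_simp; ring
    rw [hc1', hc2']
    have h2p : (2 * p * (1 - p)) ≠ 0 := by positivity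
    field_simp
  have hs2 : s ^ 2 = (c - 1) * (c + 1) := by
    rw [hs, hc, Real.sinh_sq]; ring
  -- pointwise bound
  have hub : ∀ w : ℝ, |A' (K + A w) * A' w| ≤ (c - 1) / (c + d) := by
    intro w
    rw [hA', hA']
    set D1 := c + Real.cosh (2 * (K + A w)) with hD1
    set D2 := c + Real.cosh (2 * w) with hD2
    have hD1ge : c + 1 ≤ D1 := by simpa [hD1] using Real.one_le_cosh (2 * (K + A w))
    have hD2ge : c + 1 ≤ D2 := by simpa [hD2] using Real.one_le_cosh (2 * w)
    have hD1pos : 0 < D1 := by linarith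
    have hD2pos : 0 < D2 := by linarith
    have habs : |s / D1 * (s / D2)| = s ^ 2 / (D1 * D2) := by
      rw [div_mul_div_comm, ← sq, abs_of_nonneg (by positivity)]
    rw [habs, hs2]
    have hDD : (c + 1) * (c + d) ≤ D1 * D2 := by
      rcases le_or_gt (|K| / 2) |w| with hw | hw
      · have : d ≤ Real.cosh (2 * w) := by
          rw [hd, Real.cosh_le_cosh, abs_mul]
          rw [abs_two]; linarith
        have hD2d : c + d ≤ D2 := by rw [hD2]; linarith
        calc (c + 1) * (c + d) ≤ D1 * (c + d) :=
              mul_le_mul_of_nonneg_right hD1ge (by linarith)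
          _ ≤ D1 * D2 := mul_le_mul_of_nonneg_left hD2d (le_of_lt hD1pos)
      · have hAw : |A w| ≤ |w| := by rw [hA]; exact abs_A_le J w
        have hKA : |K| ≤ |2 * (K + A w)| := by
          have h1 : |K| - |A w| ≤ |K + A w| := by
            have := abs_sub_abs_le_abs_sub K (-(A w))
            simp only [sub_neg_eq_add, abs_neg] at this
            linarith
          rw [abs_mul, abs_two]
          have : |K| / 2 ≤ |K + A w| := by linarith
          linarith
        have : d ≤ Real.cosh (2 * (K + A w)) := by
          rw [hd, Real.cosh_le_cosh]; exact hKA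
        have hD1d : c + d ≤ D1 := by rw [hD1]; linarith
        calc (c + 1) * (c + d) = (c + d) * (c + 1) := by ring
          _ ≤ D1 * (c + 1) := mul_le_mul_of_nonneg_right hD1d (by linarith)
          _ ≤ D1 * D2 := mul_le_mul_of_nonneg_left hD2ge (le_of_lt hD1pos)
    calc (c - 1) * (c + 1) / (D1 * D2) ≤ (c - 1) * (c + 1) / ((c + 1) * (c + d)) := by
          apply div_le_div_of_nonneg_left _ (by nlinarith) hDD
          nlinarith
      _ = (c - 1) / (c + d) := by
          rw [mul_comm (c + 1) (c + d), mul_div_mul_right _ _ (by linarith : c + 1 ≠ 0)]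
  have hbdd : BddAbove (Set.range fun w : ℝ => |A' (K + A w) * A' w|) := by
    refine ⟨(c - 1) / (c + d), ?_⟩
    rintro _ ⟨w, rfl⟩
    exact hub w
  have hlt : (c - 1) / (c + d) < (1 - 2 * p) ^ 2 := by
    rw [← hkey]
    apply div_lt_div_of_pos_left (by linarith) (by linarith) (by linarith)
  have hsup_le : (⨆ w : ℝ, |A' (K + A w) * A' w|) < (1 - 2 * p) ^ 2 :=
    lt_of_le_of_lt (ciSup_le hub) hlt
  have hsup_nonneg : 0 ≤ ⨆ w : ℝ, |A' (K + A w) * A' w| :=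
    le_trans (abs_nonneg _) (le_ciSup hbdd 0)
  refine ⟨hsup_le, ?_⟩
  calc Real.sqrt (⨆ w : ℝ, |A' (K + A w) * A' w|)
      < Real.sqrt ((1 - 2 * p) ^ 2) := Real.sqrt_lt_sqrt hsup_nonneg hsup_le
    _ = |1 - 2 * p| := Real.sqrt_sq_eq_abs _
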